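/- Any rectifiable curve joining the sphere of radius a to the sphere of radius b (0 < a < b) in a normed space has the property that ∫_γ ds/‖x‖ ≥ log(b/a). -/

import Mathlib

/-!
The norm of a curve need not be differentiable, but it always has a right derivative: near `t`,
`‖γ s‖` agrees to first order with `‖γ t + (s - t) • γ' t‖`, a convex function of `s`, whose right
derivative at `t` is at most `‖γ' t‖`. Hence `log ‖γ‖` has right derivative at most
`‖γ'‖ / ‖γ‖`, and the one-sided form of the fundamental theorem of calculus bounds
`log ‖γ 1‖ - log ‖γ 0‖ = log (b / a)` by the integral of `‖γ'‖ / ‖γ‖`.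
-/

open Set Filter Topology Asymptotics

section

variable {X : Type*} [NormedAddCommGroup X] [NormedSpace ℝ X]

theorem HasDerivWithinAt.congr_of_isLittleO {f g : ℝ → X} {d : X} {s : Set ℝ} {x : ℝ}
    (hg : HasDerivWithinAt g d s x) (hfg : f x = g x)
    (hsmall : (fun y => f y - g y) =o[𝓝[s] x] fun y => y - x) :
    HasDerivWithinAt f d s x := by
  refine HasDerivWithinAt.of_isLittleO ((hsmall.add hg.isLittleO).congr_left fun y => ?_)
  rw [hfg]
  abel

theorem convexOn_univ_norm_add_sub_smul (x v : X) (t : ℝ) :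
    ConvexOn ℝ univ fun s : ℝ => ‖x + (s - t) • v‖ := by
  have h := convexOn_univ_norm.comp_affineMap
    (AffineMap.lineMap (k := ℝ) (x - t • v) (x + (1 - t) • v))
  rw [preimage_univ] at h
  refine h.congr fun s _ => ?_
  simp only [Function.comp_apply, AffineMap.lineMap_apply_module']
  congr 1
  module

theorem exists_hasDerivWithinAt_Ioi_norm_add_sub_smul (x v : X) (t : ℝ) :
    ∃ d ≤ ‖v‖, HasDerivWithinAt (fun s : ℝ => ‖x + (s - t) • v‖) d (Ioi t) t := by
  set N : ℝ → ℝ := fun s => ‖x + (s - t) • v‖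
  have hconvex : ConvexOn ℝ univ N := convexOn_univ_norm_add_sub_smul x v t
  have hN : HasDerivWithinAt N (derivWithin N (Ioi t) t) (Ioi t) t :=
    hconvex.hasDerivWithinAt_rightDeriv_of_mem_interior (by simp)
  refine ⟨_, ?_, hN⟩
  calc derivWithin N (Ioi t) t ≤ slope N t (t + 1) :=
        hconvex.rightDeriv_le_slope (mem_univ _) (mem_univ _) (lt_add_one t)
          hN.differentiableWithinAt
    _ = ‖x + v‖ - ‖x‖ := by simp [N, slope_def_field]
    _ ≤ ‖v‖ := by simpa using norm_sub_norm_le (x + v) x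

theorem HasDerivAt.exists_hasDerivWithinAt_Ioi_norm_le {γ : ℝ → X} {v : X} {t : ℝ}
    (hγ : HasDerivAt γ v t) : ∃ d ≤ ‖v‖, HasDerivWithinAt (fun s => ‖γ s‖) d (Ioi t) t := by
  obtain ⟨d, hdv, hd⟩ := exists_hasDerivWithinAt_Ioi_norm_add_sub_smul (γ t) v t
  refine ⟨d, hdv, hd.congr_of_isLittleO (by simp) ?_⟩
  have hclose : (fun s => ‖γ s‖ - ‖γ t + (s - t) • v‖) =O[𝓝[Ioi t] t]
      fun s => γ s - γ t - (s - t) • v :=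
    IsBigO.of_bound 1 <| Eventually.of_forall fun s => by
      simpa [sub_sub] using abs_norm_sub_norm_le (γ s) (γ t + (s - t) • v)
  exact hclose.trans_isLittleO (hγ.isLittleO.mono nhdsWithin_le_nhds)

theorem log_norm_sub_log_norm_le_integral_norm_deriv_div_norm {γ : ℝ → X} {a b : ℝ}
    (hab : a ≤ b) (hcont : ContinuousOn γ (Icc a b))
    (hdiff : ∀ t ∈ Ioo a b, DifferentiableAt ℝ γ t) (hne : ∀ t ∈ Icc a b, γ t ≠ 0)
    (hint : IntervalIntegrable (fun t => ‖deriv γ t‖ / ‖γ t‖) MeasureTheory.volume a b) :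
    Real.log ‖γ b‖ - Real.log ‖γ a‖ ≤ ∫ t in a..b, ‖deriv γ t‖ / ‖γ t‖ := by
  have hlog_deriv : ∀ t ∈ Ioo a b, ∃ d ≤ ‖deriv γ t‖ / ‖γ t‖,
      HasDerivWithinAt (fun s => Real.log ‖γ s‖) d (Ioi t) t := by
    intro t ht
    obtain ⟨d, hdv, hd⟩ := (hdiff t ht).hasDerivAt.exists_hasDerivWithinAt_Ioi_norm_le
    have hγt : 0 < ‖γ t‖ := norm_pos_iff.2 (hne t (Ioo_subset_Icc_self ht))
    exact ⟨d / ‖γ t‖, by gcongr, hd.log hγt.ne'⟩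
  choose! g' hg'_le hg' using hlog_deriv
  exact intervalIntegral.sub_le_integral_of_hasDeriv_right_of_le hab
    (hcont.norm.log fun t ht => norm_ne_zero_iff.2 (hne t ht)) hg'
    ((intervalIntegrable_iff_integrableOn_Icc_of_le hab).1 hint) hg'_le

end

theorem curve_joining_spheres_log_estimate_general
    {X : Type*} [NormedAddCommGroup X] [NormedSpace ℝ X]
    (a b : ℝ) (ha : 0 < a)
    (γ : ℝ → X) (hγ : Differentiable ℝ γ)
    (h0 : ‖γ 0‖ = a) (h1 : ‖γ 1‖ = b)
    (hbetween : ∀ t ∈ Icc (0:ℝ) 1, a ≤ ‖γ t‖ ∧ ‖γ t‖ ≤ b)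
    (hint : IntervalIntegrable (fun t => ‖deriv γ t‖ / ‖γ t‖) MeasureTheory.volume 0 1) :
    Real.log (b / a) ≤ ∫ t in (0:ℝ)..1, ‖deriv γ t‖ / ‖γ t‖ := by
  have hne : ∀ t ∈ Icc (0:ℝ) 1, γ t ≠ 0 := fun t ht =>
    norm_pos_iff.1 (ha.trans_le (hbetween t ht).1)
  have hb : b ≠ 0 := h1 ▸ norm_ne_zero_iff.2 (hne 1 (right_mem_Icc.2 zero_le_one))
  have key := log_norm_sub_log_norm_le_integral_norm_deriv_div_norm zero_le_one
    hγ.continuous.continuousOn (fun t _ => hγ t) hne hint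
  rwa [h0, h1, ← Real.log_div hb ha.ne'] at key

theorem curve_joining_spheres_log_estimate
    {X : Type*} [NormedAddCommGroup X] [NormedSpace ℝ X]
    (a b : ℝ) (ha : 0 < a) (hab : a < b)
    (γ : ℝ → X) (hγ : Differentiable ℝ γ)
    (h0 : ‖γ 0‖ = a) (h1 : ‖γ 1‖ = b)
    (hbetween : ∀ t ∈ Icc (0:ℝ) 1, a ≤ ‖γ t‖ ∧ ‖γ t‖ ≤ b)
    (hint : IntervalIntegrable (fun t => ‖deriv γ t‖ / ‖γ t‖) MeasureTheory.volume 0 1) :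
    Real.log (b / a) ≤ ∫ t in (0:ℝ)..1, ‖deriv γ t‖ / ‖γ t‖ :=
  curve_joining_spheres_log_estimate_general a b ha γ hγ h0 h1 hbetween hint
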